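/- arXiv:2305.03022 — 5 statements merged into one kernel-verified Lean document; each statement's English description precedes it below -/
import Mathlib

section
/- Let X be a real-valued random variable on a probability space such that 0 ≤ X ≤ K/e almost surely, where K > 0 is a real constant and e is Euler's number, and let μ = E[X]. Then Var(X) ≤ K·μ, and consequently for every real p > 0 one has Var(X) / (p · max(1, μ))² ≤ K / p². (Applied with K = R·C to the Monte Carlo variate of the expected mutual information, this is the estimate proving Theorem 1: the expected number of samples required by the FastAMI algorithm with precision p on clusterings with R and C clusters and N ≥ 3 data points is asymptotically bounded by O(RC/p²).) -/
open MeasureTheory ProbabilityTheory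

/-!
By the Bhatia–Davis inequality, a random variable with values in `[0, c]` has variance at most
`(c - E X) E X ≤ c E X`; with `c = K / e ≤ K` this is `Var X ≤ K μ`. The second bound follows
from `K μ ≤ K max(1, μ)²`.
-/

lemma variance_le_mul_integral_of_nonneg_of_le {Ω : Type*} [MeasurableSpace Ω] {P : Measure Ω}
    [IsProbabilityMeasure P] {X : Ω → ℝ} {c : ℝ} (h : ∀ᵐ ω ∂P, 0 ≤ X ω ∧ X ω ≤ c)
    (hX : AEMeasurable X P) : variance X P ≤ c * P[X] :=
  calc variance X P ≤ (c - P[X]) * (P[X] - 0) := variance_le_sub_mul_sub h hX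
    _ ≤ c * P[X] := by nlinarith [sq_nonneg P[X]]

lemma div_mul_max_one_sq_le_div_sq {v K μ : ℝ} (hK : 0 ≤ K) (h : v ≤ K * μ) (p : ℝ) :
    v / (p * max 1 μ) ^ 2 ≤ K / p ^ 2 := by
  have hm : 1 ≤ max 1 μ := le_max_left 1 μ
  have hv : v ≤ K * max 1 μ ^ 2 :=
    calc v ≤ K * μ := h
      _ ≤ K * max 1 μ := by gcongr; exact le_max_right 1 μ
      _ ≤ K * max 1 μ ^ 2 := by gcongr; nlinarith
  calc v / (p * max 1 μ) ^ 2 = v / max 1 μ ^ 2 / p ^ 2 := by rw [mul_pow, mul_comm, div_div]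
    _ ≤ K / p ^ 2 := by
      gcongr
      exact (div_le_iff₀ (by positivity)).2 hv

theorem fastami_sample_bound_general {Ω : Type*} [MeasureSpace Ω]
    [IsProbabilityMeasure (ℙ : Measure Ω)]
    (X : Ω → ℝ) (hXint : Integrable X ℙ)
    (K : ℝ) (hK : 0 < K)
    (hbound : ∀ᵐ ω ∂ℙ, 0 ≤ X ω ∧ X ω ≤ K / Real.exp 1)
    (μ : ℝ) (hμ : μ = ∫ ω, X ω ∂ℙ) :
    variance X ℙ ≤ K * μ ∧
      ∀ p : ℝ, 0 < p → variance X ℙ / (p * max 1 μ) ^ 2 ≤ K / p ^ 2 := by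
  have hμ0 : 0 ≤ μ := hμ ▸ integral_nonneg_of_ae (hbound.mono fun _ h => h.1)
  have hvar : variance X ℙ ≤ K * μ :=
    calc variance X ℙ ≤ K / Real.exp 1 * μ :=
          hμ ▸ variance_le_mul_integral_of_nonneg_of_le hbound hXint.aemeasurable
      _ ≤ K * μ := by
          gcongr
          exact div_le_self hK.le (Real.one_le_exp zero_le_one)
  exact ⟨hvar, fun p _ => div_mul_max_one_sq_le_div_sq hK.le hvar p⟩

/-- If `0 ≤ X ≤ K / e` almost surely with `K > 0` and `μ = E[X]`, then
`Var X ≤ K * μ`, and consequently `Var X / (p * max 1 μ)^2 ≤ K / p^2` for every `p > 0`. -/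
theorem fastami_sample_bound {Ω : Type*} [MeasureSpace Ω]
    [IsProbabilityMeasure (ℙ : Measure Ω)]
    (X : Ω → ℝ) (hXint : Integrable X ℙ) (hX2 : MemLp X 2 ℙ)
    (K : ℝ) (hK : 0 < K)
    (hbound : ∀ᵐ ω ∂ℙ, 0 ≤ X ω ∧ X ω ≤ K / Real.exp 1)
    (μ : ℝ) (hμ : μ = ∫ ω, X ω ∂ℙ) :
    variance X ℙ ≤ K * μ ∧
      ∀ p : ℝ, 0 < p → variance X ℙ / (p * max 1 μ) ^ 2 ≤ K / p ^ 2 :=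
  fastami_sample_bound_general X hXint K hK hbound μ hμ
end

section
/- For all real numbers n, a, b, N with 0 < n ≤ a ≤ b ≤ N, one has a·b·log(N·n/(a·b)) ≤ N·b·log(N/b), where log denotes the natural logarithm. -/
/-- For reals `0 < n ≤ a ≤ b ≤ N`, `a·b·log(N·n/(a·b)) ≤ N·b·log(N/b)`. -/
theorem mi_variate_le (n a b N : ℝ) (hn : 0 < n) (hna : n ≤ a) (hab : a ≤ b) (hbN : b ≤ N) :
    a * b * Real.log (N * n / (a * b)) ≤ N * b * Real.log (N / b) := by
  have h0a : 0 < a := lt_of_lt_of_le hn hna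
  have h0b : 0 < b := lt_of_lt_of_le h0a hab
  have h0N : 0 < N := lt_of_lt_of_le h0b hbN
  have h1 : N * n / (a * b) ≤ N / b := by
    rw [div_le_div_iff₀ (by positivity) h0b]
    nlinarith [mul_le_mul_of_nonneg_left hna (le_of_lt h0N), mul_le_mul_of_nonneg_right (mul_le_mul_of_nonneg_left hna (le_of_lt h0N)) (le_of_lt h0b)]
  have h2 : Real.log (N * n / (a * b)) ≤ Real.log (N / b) :=
    Real.log_le_log (by positivity) h1
  have h3 : 0 ≤ Real.log (N / b) :=
    Real.log_nonneg ((one_le_div h0b).mpr hbN)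
  nlinarith [mul_le_mul_of_nonneg_left h2 (by positivity : (0:ℝ) ≤ a * b),
    mul_le_mul_of_nonneg_right (le_trans hab hbN) h3]
end

section
/- (Correctness of the sparsity-exploiting Monte Carlo estimator: absorbing the linear factor into the hypergeometric distribution.) For natural numbers N, a, b with 1 ≤ a ≤ N and 1 ≤ b ≤ N, one has, as an identity of real numbers, Σ_{n = max(1, a+b−N)}^{min(a,b)} (n/N) · log(N·n/(a·b)) · P{n | a, b, N} = (a·b/N²) · Σ_{m = max(0, a+b−N−1)}^{min(a,b)−1} log((m+1)·N/(a·b)) · P{m | a−1, b−1, N−1}, where P denotes the hypergeometric probability mass function and log the natural logarithm. (Hence drawing m from the hypergeometric distribution with parameters a−1, b−1, N−1 and returning (a·b/N²)·log((m+1)·N/(a·b)) yields an unbiased estimator of the per-cell contribution to the expected mutual information.) -/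
/-- The hypergeometric probability mass function `P{n | a, b, N}`, as a real number.
Outside the support `max(0, a+b−N) ≤ n ≤ min(a,b)` both binomial coefficients vanish,
so this formula is the pmf everywhere. -/
noncomputable def hypergeomPmf (N a b n : ℕ) : ℝ :=
  ((b.choose n : ℝ) * ((N - b).choose (a - n) : ℝ)) / (N.choose a : ℝ)

/-! The absorption identity `(n/N) · P{n | a, b, N} = (ab/N²) · P{n-1 | a-1, b-1, N-1}` follows
from `k · C(m, k) = m · C(m-1, k-1)` applied to `C(b, n)` and `C(N, a)`; it turns the left sum
termwise into the right one under the shift `n = m + 1`. -/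

lemma cast_choose_succ_succ (n k : ℕ) :
    ((n + 1).choose (k + 1) : ℝ) = (n + 1) * n.choose k / (k + 1) := by
  rw [eq_div_iff (by positivity)]
  exact_mod_cast (n.add_one_mul_choose_eq k).symm

lemma succ_div_mul_hypergeomPmf_succ (N a b n : ℕ) :
    ((n + 1 : ℝ) / (N + 1)) * hypergeomPmf (N + 1) (a + 1) (b + 1) (n + 1)
      = ((a + 1) * (b + 1) / (N + 1) ^ 2) * hypergeomPmf N a b n := by
  unfold hypergeomPmf
  rw [Nat.add_sub_add_right, Nat.add_sub_add_right, cast_choose_succ_succ, cast_choose_succ_succ]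
  field_simp

theorem emi_cell_absorb_linear_term_general (N a b : ℕ)
    (ha1 : 1 ≤ a) (haN : a ≤ N) (hb1 : 1 ≤ b) :
    ∑ n ∈ Finset.Icc (max 1 (a + b - N)) (min a b),
        ((n : ℝ) / (N : ℝ)) * Real.log ((N : ℝ) * (n : ℝ) / ((a : ℝ) * (b : ℝ))) *
          hypergeomPmf N a b n
      = ((a : ℝ) * (b : ℝ) / (N : ℝ) ^ 2) *
          ∑ m ∈ Finset.Icc (max 0 (a + b - N - 1)) (min a b - 1),
            Real.log (((m : ℝ) + 1) * (N : ℝ) / ((a : ℝ) * (b : ℝ))) *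
              hypergeomPmf (N - 1) (a - 1) (b - 1) m := by
  obtain ⟨a, rfl⟩ : ∃ a', a = a' + 1 := ⟨a - 1, by omega⟩
  obtain ⟨b, rfl⟩ : ∃ b', b = b' + 1 := ⟨b - 1, by omega⟩
  obtain ⟨N, rfl⟩ : ∃ N', N = N' + 1 := ⟨N - 1, by omega⟩
  have shift : Finset.Icc (max 1 (a + 1 + (b + 1) - (N + 1))) (min (a + 1) (b + 1))
      = (Finset.Icc (max 0 (a + 1 + (b + 1) - (N + 1) - 1)) (min (a + 1) (b + 1) - 1)).map
          (addRightEmbedding 1) := by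
    rw [Finset.map_add_right_Icc]
    congr 1 <;> omega
  rw [shift, Finset.sum_map, Finset.mul_sum]
  refine Finset.sum_congr rfl fun m _ => ?_
  simp only [addRightEmbedding_apply, Nat.add_sub_cancel]
  push_cast
  rw [mul_comm (N + 1 : ℝ) (m + 1)]
  linear_combination Real.log ((m + 1) * (N + 1) / ((a + 1) * (b + 1)) : ℝ) *
    succ_div_mul_hypergeomPmf_succ N a b m

/-- Absorbing the linear factor into the hypergeometric distribution:
`∑_{n = max(1, a+b−N)}^{min(a,b)} (n/N) · log(N·n/(a·b)) · P{n | a, b, N}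
  = (a·b/N²) · ∑_{m = max(0, a+b−N−1)}^{min(a,b)−1} log((m+1)·N/(a·b)) · P{m | a−1, b−1, N−1}`. -/
theorem emi_cell_absorb_linear_term (N a b : ℕ)
    (ha1 : 1 ≤ a) (haN : a ≤ N) (hb1 : 1 ≤ b) (hbN : b ≤ N) :
    ∑ n ∈ Finset.Icc (max 1 (a + b - N)) (min a b),
        ((n : ℝ) / (N : ℝ)) * Real.log ((N : ℝ) * (n : ℝ) / ((a : ℝ) * (b : ℝ))) *
          hypergeomPmf N a b n
      = ((a : ℝ) * (b : ℝ) / (N : ℝ) ^ 2) *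
          ∑ m ∈ Finset.Icc (max 0 (a + b - N - 1)) (min a b - 1),
            Real.log (((m : ℝ) + 1) * (N : ℝ) / ((a : ℝ) * (b : ℝ))) *
              hypergeomPmf (N - 1) (a - 1) (b - 1) m :=
  emi_cell_absorb_linear_term_general N a b ha1 haN hb1
end

section
/- (Nonnegativity of the per-cell expected contribution to the expected mutual information.) For natural numbers N, a, b with 1 ≤ a ≤ N and 1 ≤ b ≤ N, one has Σ_{n = max(1, a+b−N)}^{min(a,b)} (n/N) · log(N·n/(a·b)) · P{n | a, b, N} ≥ 0, where P denotes the hypergeometric probability mass function and log the natural logarithm. (This follows from Jensen's inequality applied to the convex function x ↦ x·log(x·N/(a·b)), since the hypergeometric mean is a·b/N.) -/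
lemma vandermonde_range (m n a : ℕ) :
    ∑ i ∈ Finset.range (a+1), m.choose i * n.choose (a - i) = (m + n).choose a := by
  rw [Nat.add_choose_eq, Finset.Nat.sum_antidiagonal_eq_sum_range_succ_mk]

lemma sum_mul_vand (N a b : ℕ) (ha1 : 1 ≤ a) (hb1 : 1 ≤ b) (hbN : b ≤ N) :
    ∑ i ∈ Finset.range (a+1), i * (b.choose i * (N-b).choose (a-i))
      = b * (N-1).choose (a-1) := by
  rw [Finset.sum_range_succ']
  simp only [Nat.zero_mul, add_zero]
  obtain ⟨a', rfl⟩ : ∃ a', a = a' + 1 := ⟨a - 1, (Nat.succ_pred_eq_of_pos ha1).symm⟩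
  obtain ⟨b', rfl⟩ : ∃ b', b = b' + 1 := ⟨b - 1, (Nat.succ_pred_eq_of_pos hb1).symm⟩
  have h1 : ∀ k, (k+1) * ((b'+1).choose (k+1) * (N-(b'+1)).choose (a'+1-(k+1)))
      = (b'+1) * (b'.choose k * (N-(b'+1)).choose (a'-k)) := by
    intro k
    have := Nat.add_one_mul_choose_eq b' k
    have h2 : a' + 1 - (k+1) = a' - k := by omega
    rw [h2, ← mul_assoc, mul_comm (k+1) _, ← this]
    ring
  simp only [h1, ← Finset.mul_sum]
  congr 1
  simp only [Nat.add_sub_cancel]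
  have : b' + (N - (b'+1)) = N - 1 := by omega
  rw [← this, ← vandermonde_range]

lemma choose_mul_eq (N a : ℕ) (ha1 : 1 ≤ a) (haN : a ≤ N) :
    N * (N-1).choose (a-1) = N.choose a * a := by
  obtain ⟨a', rfl⟩ : ∃ a', a = a' + 1 := ⟨a - 1, (Nat.succ_pred_eq_of_pos ha1).symm⟩
  obtain ⟨N', rfl⟩ : ∃ N', N = N' + 1 := ⟨N - 1, (Nat.succ_pred_eq_of_pos (le_trans ha1 haN)).symm⟩
  simp only [Nat.add_sub_cancel]
  exact Nat.add_one_mul_choose_eq N' a'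

/-- Nonnegativity of the per-cell expected contribution to the expected mutual
information: `∑_{n = max(1, a+b−N)}^{min(a,b)} (n/N) · log(N·n/(a·b)) · P{n | a, b, N} ≥ 0`. -/
theorem emi_cell_nonneg (N a b : ℕ) (ha1 : 1 ≤ a) (haN : a ≤ N) (hb1 : 1 ≤ b) (hbN : b ≤ N) :
    0 ≤ ∑ n ∈ Finset.Icc (max 1 (a + b - N)) (min a b),
        ((n : ℝ) / (N : ℝ)) * Real.log ((N : ℝ) * (n : ℝ) / ((a : ℝ) * (b : ℝ))) *
          hypergeomPmf N a b n := by
  have hN1 : 1 ≤ N := le_trans ha1 haN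
  have hNpos : (0:ℝ) < N := by exact_mod_cast hN1
  have hapos : (0:ℝ) < a := by exact_mod_cast ha1
  have hbpos : (0:ℝ) < b := by exact_mod_cast hb1
  have hc : (0:ℝ) < (N.choose a : ℝ) := by exact_mod_cast Nat.choose_pos haN
  set L := max 1 (a + b - N) with hL
  set M := min a b with hM
  have hsub : Finset.Icc L M ⊆ Finset.range (a+1) := by
    intro i hi
    simp only [Finset.mem_Icc, Finset.mem_range] at hi ⊢
    omega
  -- nat sum identities
  have hSnat : ∑ n ∈ Finset.Icc L M, n * (b.choose n * (N-b).choose (a-n))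
      = b * (N-1).choose (a-1) := by
    rw [← sum_mul_vand N a b ha1 hb1 hbN]
    apply Finset.sum_subset hsub
    intro i hi hnot
    simp only [Finset.mem_Icc, Finset.mem_range] at hi hnot
    rcases Nat.eq_zero_or_pos i with rfl | hi1
    · simp
    by_cases hlow : i < L
    · have : N - b < a - i := by omega
      rw [Nat.choose_eq_zero_of_lt this]
      ring
    · have hbi : b < i := by omega
      rw [Nat.choose_eq_zero_of_lt hbi]
      ring
  have hTnat : ∑ n ∈ Finset.Icc L M, (b.choose n * (N-b).choose (a-n)) ≤ N.choose a := by
    have hv := vandermonde_range b (N-b) a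
    rw [show b + (N-b) = N by omega] at hv
    rw [← hv]
    exact Finset.sum_le_sum_of_subset hsub
  have hkey : a * b * (∑ n ∈ Finset.Icc L M, (b.choose n * (N-b).choose (a-n)))
      ≤ N * (∑ n ∈ Finset.Icc L M, n * (b.choose n * (N-b).choose (a-n))) := by
    rw [hSnat]
    calc a * b * (∑ n ∈ Finset.Icc L M, (b.choose n * (N-b).choose (a-n)))
        ≤ a * b * (N.choose a) := Nat.mul_le_mul_left _ hTnat
      _ = N * (b * (N-1).choose (a-1)) := by
          rw [show N * (b * (N-1).choose (a-1)) = b * (N * (N-1).choose (a-1)) by ring,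
            choose_mul_eq N a ha1 haN]; ring
  -- pointwise bound
  have hstep : ∀ n ∈ Finset.Icc L M,
      ((n:ℝ)/N - (a:ℝ)*(b:ℝ)/((N:ℝ)^2)) * hypergeomPmf N a b n ≤
      ((n : ℝ) / (N : ℝ)) * Real.log ((N : ℝ) * (n : ℝ) / ((a : ℝ) * (b : ℝ))) *
          hypergeomPmf N a b n := by
    intro n hn
    simp only [Finset.mem_Icc] at hn
    have hn1 : 1 ≤ n := le_trans (le_max_left _ _) hn.1
    have hnpos : (0:ℝ) < n := by exact_mod_cast hn1
    have hx : (0:ℝ) < (N:ℝ) * n / ((a:ℝ) * b) := by positivity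
    have hlog := Real.one_sub_inv_le_log_of_pos hx
    have hP : 0 ≤ hypergeomPmf N a b n := by
      unfold hypergeomPmf; positivity
    have heq : ((n:ℝ)/N - (a:ℝ)*(b:ℝ)/((N:ℝ)^2))
        = ((n:ℝ)/N) * (1 - ((N:ℝ) * n / ((a:ℝ) * b))⁻¹) := by
      field_simp
    rw [heq]
    apply mul_le_mul_of_nonneg_right _ hP
    exact mul_le_mul_of_nonneg_left hlog (by positivity)
  refine le_trans ?_ (Finset.sum_le_sum hstep)
  -- compute lower sum
  have hterm : ∀ n : ℕ, ((n:ℝ)/N - (a:ℝ)*(b:ℝ)/((N:ℝ)^2)) * hypergeomPmf N a b n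
      = ((n:ℝ) * ((b.choose n : ℝ) * ((N - b).choose (a - n) : ℝ))) / ((N:ℝ) * (N.choose a : ℝ))
        - ((a:ℝ)*(b:ℝ) * ((b.choose n : ℝ) * ((N - b).choose (a - n) : ℝ))) / ((N:ℝ)^2 * (N.choose a : ℝ)) := by
    intro n
    unfold hypergeomPmf
    rw [sub_mul, div_mul_div_comm, div_mul_div_comm]
  simp only [hterm]
  rw [Finset.sum_sub_distrib, ← Finset.sum_div, ← Finset.sum_div, ← Finset.mul_sum]
  rw [sub_nonneg, div_le_div_iff₀ (by positivity) (by positivity)]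
  have hkeyR : (a:ℝ) * b * (∑ n ∈ Finset.Icc L M, ((b.choose n : ℝ) * ((N-b).choose (a-n) : ℝ)))
      ≤ (N:ℝ) * (∑ n ∈ Finset.Icc L M, (n:ℝ) * ((b.choose n : ℝ) * ((N-b).choose (a-n) : ℝ))) := by
    exact_mod_cast hkey
  nlinarith [hc, hNpos, hkeyR, mul_le_mul_of_nonneg_right hkeyR (mul_nonneg hNpos.le hc.le)]
end

section
/- (For a fixed number of data points, the chance of an empty cluster grows with the number of clusters.) Fix a natural number N ≥ 1. For natural numbers C ≥ 1, let q(C) denote the probability that a uniformly random function f : Fin N → Fin C is not surjective, i.e., q(C) = (C^N − |{f : Fin N → Fin C | f surjective}|) / C^N. Then q is monotone nondecreasing in C: for all 1 ≤ C ≤ C', q(C) ≤ q(C'). -/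
lemma surj_card_step (N C : ℕ) :
    Fintype.card {g : Fin N → Fin (C+1) // Function.Surjective g} * C ^ N ≤
    Fintype.card {f : Fin N → Fin C // Function.Surjective f} * (C+1) ^ N := by
  classical
  set F : ({g : Fin N → Fin (C+1) // Function.Surjective g} × (Fin N → Fin C)) →
      ({f : Fin N → Fin C // Function.Surjective f} × (Fin N → Fin (C+1))) :=
    fun p =>
      ⟨⟨fun i => if h : (p.1 : Fin N → Fin (C+1)) i = Fin.last C then p.2 i
            else ((p.1 : Fin N → Fin (C+1)) i).castPred h,
        by
          intro c
          obtain ⟨i, hi⟩ := p.1.2 c.castSucc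
          refine ⟨i, ?_⟩
          have hne : (p.1 : Fin N → Fin (C+1)) i ≠ Fin.last C := by
            rw [hi]; exact (Fin.castSucc_lt_last c).ne
          simp only [dif_neg hne]
          simp [hi]⟩,
       fun i => if (p.1 : Fin N → Fin (C+1)) i = Fin.last C then Fin.last C
            else ((p.2 i).castSucc)⟩ with hF
  have hinj : Function.Injective F := by
    rintro ⟨⟨g1, hg1⟩, f1⟩ ⟨⟨g2, hg2⟩, f2⟩ h
    have h1 := congrArg Prod.fst h
    have h2 := congrArg Prod.snd h
    simp only [hF] at h1 h2
    have h1' : ∀ i, (if h : g1 i = Fin.last C then f1 i else (g1 i).castPred h)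
        = (if h : g2 i = Fin.last C then f2 i else (g2 i).castPred h) :=
      fun i => congrFun (congrArg Subtype.val h1) i
    have h2' : ∀ i, (if g1 i = Fin.last C then Fin.last C else (f1 i).castSucc)
        = (if g2 i = Fin.last C then Fin.last C else (f2 i).castSucc) :=
      fun i => congrFun h2 i
    have key : ∀ i, g1 i = g2 i ∧ f1 i = f2 i := by
      intro i
      by_cases hc1 : g1 i = Fin.last C <;> by_cases hc2 : g2 i = Fin.last C
      · refine ⟨hc1.trans hc2.symm, ?_⟩
        have := h1' i; simpa [hc1, hc2] using this
      · exfalso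
        have := h2' i
        rw [if_pos hc1, if_neg hc2] at this
        exact (Fin.castSucc_lt_last (f2 i)).ne this.symm
      · exfalso
        have := h2' i
        rw [if_neg hc1, if_pos hc2] at this
        exact (Fin.castSucc_lt_last (f1 i)).ne this
      · constructor
        · have := h1' i
          rw [dif_neg hc1, dif_neg hc2] at this
          have : ((g1 i : Fin (C+1)) : ℕ) = ((g2 i : Fin (C+1)) : ℕ) := by
            simpa [Fin.castPred, Fin.ext_iff] using this
          exact Fin.ext this
        · have := h2' i
          rw [if_neg hc1, if_neg hc2] at this
          exact Fin.castSucc_injective _ this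
    refine Prod.ext ?_ ?_
    · exact Subtype.ext (funext fun i => (key i).1)
    · exact funext fun i => (key i).2
  have h := Fintype.card_le_of_injective F hinj
  simpa [Fintype.card_prod, Fintype.card_fun, Fintype.card_fin] using h

/-- For a fixed number of data points `N ≥ 1`, the probability `q(C)` that a uniformly
random function `Fin N → Fin C` is not surjective (i.e. at least one of the `C` clusters
is empty) is monotone nondecreasing in the number of clusters `C ≥ 1`. -/
theorem prob_empty_cluster_monotone (N : ℕ) (hN : 1 ≤ N)
    (q : ℕ → ℝ)
    (hq : ∀ C : ℕ, 1 ≤ C →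
      q C = (((C : ℝ) ^ N -
          (Fintype.card {f : Fin N → Fin C // Function.Surjective f} : ℝ)) / (C : ℝ) ^ N)) :
    ∀ C C' : ℕ, 1 ≤ C → C ≤ C' → q C ≤ q C' := by
  have step : ∀ m : ℕ, 1 ≤ m → q m ≤ q (m+1) := by
    intro m hm
    rw [hq m hm, hq (m+1) (le_trans hm (Nat.le_succ m))]
    have hm0 : (0:ℝ) < (m:ℝ) ^ N := by positivity
    have hm1 : (0:ℝ) < ((m:ℝ)+1) ^ N := by positivity
    have hcard := surj_card_step N m
    have hcardR : (Fintype.card {g : Fin N → Fin (m+1) // Function.Surjective g} : ℝ) * (m:ℝ) ^ N ≤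
        (Fintype.card {f : Fin N → Fin m // Function.Surjective f} : ℝ) * ((m:ℝ)+1) ^ N := by
      have := (Nat.cast_le (α := ℝ)).2 hcard
      push_cast at this
      convert this using 2 <;> push_cast <;> ring
    push_cast
    rw [div_le_div_iff₀ hm0 hm1]
    nlinarith [hcardR]
  intro C C' hC hCC'
  induction C' with
  | zero => omega
  | succ n ih =>
    rcases Nat.lt_or_ge C (n+1) with h | h
    · have hn : 1 ≤ n := by omega
      exact le_trans (ih (by omega)) (step n hn)
    · have : C = n + 1 := by omega
      rw [this]
end
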